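/- arXiv:2311.18740 — 6 statements merged into one kernel-verified Lean document; each statement's English description precedes it below -/
import Mathlib

section
/- Let G = (A, B, E) be a bipartite graph with |A| ≥ 2 such that every vertex in B has at least one neighbor in A. Then there exist subsets X ⊆ A and B' ⊆ B with |B'| ≥ |B| / (150 · ln |A|) such that every vertex b ∈ B' has exactly one neighbor in X. -/
/-!
Sort the vertices of `B` into the `⌊log₂ |A|⌋ + 1` dyadic classes `2^i ≤ |N(b)| < 2^(i+1)` and
keep the largest class. Put each vertex of `A` into `X` independently with probability
`p = 2^-(i+1)`. A vertex of degree `d` in that class then has exactly one neighbour in `X` with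
probability `d p (1 - p)^(d - 1) ≥ 1/2 · 1/3`, so some `X` is hit exactly once by at least a
sixth of the class, i.e. by at least `|B| / (6 (log₂ |A| + 1)) ≥ |B| / (150 ln |A|)` vertices.
-/

open Finset

section SubsetWeight

variable {α : Type*} [Fintype α] (p : ℝ)

-- The probability that the random subset of `α` containing each element independently with
-- probability `p` is `X`.
def subsetWeight (X : Finset α) : ℝ := p ^ #X * (1 - p) ^ (Fintype.card α - #X)

variable {p}

lemma subsetWeight_nonneg (hp₀ : 0 ≤ p) (hp₁ : p ≤ 1) (X : Finset α) : 0 ≤ subsetWeight p X :=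
  mul_nonneg (pow_nonneg hp₀ _) (pow_nonneg (sub_nonneg.2 hp₁) _)

variable (p)

lemma sum_subsetWeight : ∑ X : Finset α, subsetWeight p X = 1 := by
  simpa [subsetWeight] using sum_pow_mul_eq_add_pow p (1 - p) (univ : Finset α)

lemma filter_inter_eq_singleton_eq_image_insert [DecidableEq α] {N : Finset α} {a : α}
    (ha : a ∈ N) : ({X | X ∩ N = {a}} : Finset (Finset α)) = Nᶜ.powerset.image (insert a) := by
  ext X
  simp only [mem_filter, mem_univ, true_and, mem_image, mem_powerset]
  constructor
  · intro hX
    refine ⟨X \ N, fun x hx => by simp_all, ?_⟩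
    ext x
    have hx := Finset.ext_iff.1 hX x
    simp only [mem_inter, mem_singleton] at hx
    simp only [mem_insert, mem_sdiff]
    grind
  · rintro ⟨Z, hZ, rfl⟩
    ext x
    have := @hZ x
    by_cases hx : x = a <;> simp_all

lemma sum_subsetWeight_inter_eq_singleton [DecidableEq α] {N : Finset α} {a : α} (ha : a ∈ N) :
    ∑ X with X ∩ N = {a}, subsetWeight p X = p * (1 - p) ^ (#N - 1) := by
  have hinj : Set.InjOn (insert a) (Nᶜ.powerset : Set (Finset α)) := by
    intro Z hZ Z' hZ' h
    have ha' : ∀ {Y : Finset α}, Y ∈ (Nᶜ.powerset : Set (Finset α)) → a ∉ Y := fun hY h =>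
      (mem_compl.1 (mem_powerset.1 hY h)) ha
    rw [← erase_insert (ha' hZ), ← erase_insert (ha' hZ'), h]
  rw [filter_inter_eq_singleton_eq_image_insert ha, sum_image hinj]
  have hweight : ∀ Z ∈ Nᶜ.powerset, subsetWeight p (insert a Z) =
      p * (1 - p) ^ (#N - 1) * (p ^ #Z * (1 - p) ^ (#Nᶜ - #Z)) := by
    intro Z hZ
    have hZN : Z ⊆ Nᶜ := mem_powerset.1 hZ
    have haZ : a ∉ Z := fun h => mem_compl.1 (hZN h) ha
    have hZc : #Z ≤ #Nᶜ := card_le_card hZN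
    have hN : 1 ≤ #N := card_pos.2 ⟨a, ha⟩
    have hNc : #Nᶜ = Fintype.card α - #N := card_compl N
    have hNα : #N ≤ Fintype.card α := card_le_univ N
    rw [subsetWeight, card_insert_of_notMem haZ,
      show Fintype.card α - (#Z + 1) = (#N - 1) + (#Nᶜ - #Z) by omega]
    ring
  rw [sum_congr rfl hweight, ← mul_sum, sum_pow_mul_eq_add_pow]
  simp

lemma sum_subsetWeight_card_inter_eq_one [DecidableEq α] (N : Finset α) :
    ∑ X with #(X ∩ N) = 1, subsetWeight p X = #N * (p * (1 - p) ^ (#N - 1)) := by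
  have hunion : ({X | #(X ∩ N) = 1} : Finset (Finset α)) =
      N.biUnion fun a => {X | X ∩ N = {a}} := by
    ext X
    simp only [mem_filter, mem_univ, true_and, mem_biUnion, card_eq_one]
    constructor
    · rintro ⟨a, ha⟩
      exact ⟨a, mem_of_mem_inter_right (ha ▸ mem_singleton_self a), ha⟩
    · rintro ⟨a, -, ha⟩
      exact ⟨a, ha⟩
  have hdisj : (N : Set α).PairwiseDisjoint fun a => ({X | X ∩ N = {a}} : Finset (Finset α)) := by
    intro a _ b _ hab
    simp only [Function.onFun, disjoint_left, mem_filter, mem_univ, true_and]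
    intro X ha hb
    exact hab (singleton_injective (ha.symm.trans hb))
  rw [hunion, sum_biUnion hdisj,
    sum_congr rfl fun a ha => sum_subsetWeight_inter_eq_singleton p ha, sum_const, nsmul_eq_mul]

lemma sum_subsetWeight_mul_card_filter [DecidableEq α] {ι : Type*} (S : Finset ι)
    (N : ι → Finset α) :
    ∑ X, subsetWeight p X * #{b ∈ S | #(X ∩ N b) = 1} =
      ∑ b ∈ S, #(N b) * (p * (1 - p) ^ (#(N b) - 1)) := by
  simp only [card_filter, Nat.cast_sum, Nat.cast_ite, Nat.cast_one, Nat.cast_zero, mul_sum]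
  rw [sum_comm]
  refine sum_congr rfl fun b _ => ?_
  rw [← sum_subsetWeight_card_inter_eq_one, sum_filter]
  simp

end SubsetWeight

lemma Fintype.exists_sum_mul_le_of_sum_eq_one {β : Type*} [Fintype β] [Nonempty β]
    {w f : β → ℝ} (hw : ∀ x, 0 ≤ w x) (hw₁ : ∑ x, w x = 1) : ∃ x, ∑ y, w y * f y ≤ f x := by
  obtain ⟨x, -, hx⟩ := univ.exists_max_image f univ_nonempty
  refine ⟨x, ?_⟩
  calc ∑ y, w y * f y ≤ ∑ y, w y * f x :=
        sum_le_sum fun y _ => mul_le_mul_of_nonneg_left (hx y (mem_univ y)) (hw y)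
    _ = f x := by rw [← sum_mul, hw₁, one_mul]

lemma one_third_le_one_sub_inv_pow (k : ℕ) :
    (1 / 3 : ℝ) ≤ (1 - ((k + 1 : ℕ) : ℝ)⁻¹) ^ k := by
  have hprod : (1 - ((k + 1 : ℕ) : ℝ)⁻¹) ^ k * (1 + (k : ℝ)⁻¹) ^ k = 1 := by
    rcases eq_or_ne k 0 with rfl | hk
    · simp
    · rw [← mul_pow]
      convert one_pow k using 2
      push_cast
      field_simp
      ring
  have hpos : 0 < (1 + (k : ℝ)⁻¹) ^ k := by positivity
  have he : (1 + (k : ℝ)⁻¹) ^ k ≤ 3 :=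
    Real.one_add_inv_pow_le_exp.trans (by linarith [Real.exp_one_lt_d9])
  rw [← eq_div_iff hpos.ne'] at hprod
  rw [hprod]
  gcongr

lemma one_sixth_le_mul_inv_mul_one_sub_inv_pow {d M : ℕ} (hM : 1 ≤ M) (hdM : d ≤ M)
    (hMd : M ≤ 2 * d) :
    (1 / 6 : ℝ) ≤ d * ((M : ℝ)⁻¹ * (1 - (M : ℝ)⁻¹) ^ (d - 1)) := by
  obtain ⟨k, rfl⟩ : ∃ k, M = k + 1 := ⟨M - 1, by omega⟩
  have hhalf : (1 / 2 : ℝ) ≤ d * ((k + 1 : ℕ) : ℝ)⁻¹ := by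
    rw [← div_eq_mul_inv, le_div_iff₀ (by positivity)]
    have : ((k + 1 : ℕ) : ℝ) ≤ 2 * d := by exact_mod_cast hMd
    linarith
  have hthird : (1 / 3 : ℝ) ≤ (1 - ((k + 1 : ℕ) : ℝ)⁻¹) ^ (d - 1) := by
    refine (one_third_le_one_sub_inv_pow k).trans (pow_le_pow_of_le_one ?_ ?_ (by omega))
    · simp only [sub_nonneg]; exact inv_le_one_of_one_le₀ (by simp)
    · simp only [sub_le_self_iff]; positivity
  calc (1 / 6 : ℝ) = 1 / 2 * (1 / 3) := by norm_num
    _ ≤ d * ((k + 1 : ℕ) : ℝ)⁻¹ * (1 - ((k + 1 : ℕ) : ℝ)⁻¹) ^ (d - 1) :=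
      mul_le_mul hhalf hthird (by norm_num) (by positivity)
    _ = _ := by ring

lemma six_mul_natLog_add_one_le {n : ℕ} (hn : 2 ≤ n) :
    6 * ((Nat.log 2 n + 1 : ℕ) : ℝ) ≤ 150 * Real.log n := by
  have hL : 1 ≤ Nat.log 2 n := Nat.le_log_of_pow_le one_lt_two (by simpa using hn)
  have hlog : (Nat.log 2 n : ℝ) * Real.log 2 ≤ Real.log n := by
    rw [← Real.log_pow]
    exact Real.log_le_log (by positivity) (by exact_mod_cast Nat.pow_log_le_self 2 (by omega))
  have hL' : (1 : ℝ) ≤ Nat.log 2 n := by exact_mod_cast hL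
  push_cast
  nlinarith [Real.log_two_gt_d9]

lemma exists_card_le_six_mul_card_filter_card_inter_eq_one {α ι : Type*} [Fintype α]
    [DecidableEq α] (S : Finset ι) (N : ι → Finset α) {M : ℕ} (hM : 1 ≤ M)
    (hdeg : ∀ b ∈ S, #(N b) ≤ M ∧ M ≤ 2 * #(N b)) :
    ∃ X : Finset α, (#S : ℝ) ≤ 6 * #{b ∈ S | #(X ∩ N b) = 1} := by
  set p : ℝ := (M : ℝ)⁻¹
  have hp₀ : 0 ≤ p := by positivity
  have hp₁ : p ≤ 1 := inv_le_one_of_one_le₀ (by exact_mod_cast hM)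
  obtain ⟨X, hX⟩ := Fintype.exists_sum_mul_le_of_sum_eq_one (f := fun X : Finset α =>
    (#{b ∈ S | #(X ∩ N b) = 1} : ℝ)) (subsetWeight_nonneg hp₀ hp₁) (sum_subsetWeight p)
  refine ⟨X, ?_⟩
  have hexp : (#S : ℝ) / 6 ≤ ∑ b ∈ S, #(N b) * (p * (1 - p) ^ (#(N b) - 1)) := by
    rw [div_eq_mul_one_div, ← nsmul_eq_mul, ← sum_const]
    exact sum_le_sum fun b hb =>
      one_sixth_le_mul_inv_mul_one_sub_inv_pow hM (hdeg b hb).1 (hdeg b hb).2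
  rw [← sum_subsetWeight_mul_card_filter] at hexp
  linarith

lemma exists_card_le_mul_card_filter_natLog_eq {β : Type*} [Fintype β] (d : β → ℕ) {n : ℕ}
    (hd : ∀ b, d b ≤ n) :
    ∃ i, (Fintype.card β : ℝ) / (Nat.log 2 n + 1 : ℕ) ≤ #{b | Nat.log 2 (d b) = i} := by
  obtain ⟨i, -, hi⟩ := exists_le_card_fiber_of_nsmul_le_card_of_maps_to
    (s := univ) (t := range (Nat.log 2 n + 1)) (f := fun b => Nat.log 2 (d b))
    (b := (Fintype.card β : ℝ) / (Nat.log 2 n + 1 : ℕ))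
    (fun b _ => mem_range_succ_iff.2 (Nat.log_mono_right (hd b))) nonempty_range_add_one
    (by rw [card_range, nsmul_eq_mul, mul_div_cancel₀ _ (by positivity), card_univ])
  exact ⟨i, hi⟩

lemma le_two_pow_natLog_succ_and_two_pow_natLog_succ_le {d : ℕ} (hd : d ≠ 0) :
    d ≤ 2 ^ (Nat.log 2 d + 1) ∧ 2 ^ (Nat.log 2 d + 1) ≤ 2 * d := by
  have := Nat.pow_log_le_self 2 hd
  have := Nat.lt_pow_succ_log_self one_lt_two d
  constructor <;> omega

theorem stmt_0_general {A B : Type} [Fintype A] [Fintype B]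
    (E : A → B → Prop)
    (hA : 2 ≤ Fintype.card A)
    (hnb : ∀ b : B, ∃ a : A, E a b) :
    ∃ (X : Finset A) (B' : Finset B),
      (Fintype.card B : ℝ) / (150 * Real.log (Fintype.card A)) ≤ (B'.card : ℝ) ∧
      ∀ b ∈ B', ∃! a : A, a ∈ X ∧ E a b := by
  classical
  set N : B → Finset A := fun b => {a | E a b}
  have hN : ∀ b, #(N b) ≠ 0 := fun b => by
    obtain ⟨a, ha⟩ := hnb b
    exact card_ne_zero_of_mem (by simpa [N] using ha)
  obtain ⟨i, hi⟩ := exists_card_le_mul_card_filter_natLog_eq (fun b => #(N b)) fun b =>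
    card_le_univ (N b)
  set bucket : Finset B := {b | Nat.log 2 #(N b) = i}
  obtain ⟨X, hX⟩ := exists_card_le_six_mul_card_filter_card_inter_eq_one bucket N
    (M := 2 ^ (i + 1)) Nat.one_le_two_pow fun b hb => by
      obtain rfl := (mem_filter.1 hb).2
      exact le_two_pow_natLog_succ_and_two_pow_natLog_succ_le (hN b)
  refine ⟨X, {b ∈ bucket | #(X ∩ N b) = 1}, ?_, fun b hb => ?_⟩
  · calc (Fintype.card B : ℝ) / (150 * Real.log (Fintype.card A))
        ≤ (Fintype.card B : ℝ) / (6 * (Nat.log 2 (Fintype.card A) + 1 : ℕ)) := by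
          exact div_le_div_of_nonneg_left (by positivity) (by positivity)
            (six_mul_natLog_add_one_le hA)
      _ = (Fintype.card B : ℝ) / (Nat.log 2 (Fintype.card A) + 1 : ℕ) / 6 := by ring
      _ ≤ _ := by linarith
  · simpa [N, card_eq_one_iff_existsUnique, inter_filter] using (mem_filter.1 hb).2

/-- In a bipartite graph `G = (A, B, E)` with `|A| ≥ 2` in which every
vertex of `B` has a neighbor in `A`, there are `X ⊆ A` and `B' ⊆ B` with
`|B'| ≥ |B| / (150 · ln |A|)` such that every `b ∈ B'` has exactly one neighbor in `X`. -/
theorem stmt_0 {A B : Type} [Fintype A] [Fintype B]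
    (E : A → B → Prop) [∀ a b, Decidable (E a b)]
    (hA : 2 ≤ Fintype.card A)
    (hnb : ∀ b : B, ∃ a : A, E a b) :
    ∃ (X : Finset A) (B' : Finset B),
      (Fintype.card B : ℝ) / (150 * Real.log (Fintype.card A)) ≤ (B'.card : ℝ) ∧
      ∀ b ∈ B', ∃! a : A, a ∈ X ∧ E a b :=
  stmt_0_general E hA hnb
end

section
/- Let S = (U, F) be a finite set system, G a graph on vertex set U whose closed neighborhoods form F, and ⪯ a total order on U with crossing number k with respect to S. Then the greedy partition of U into maximal compact prefix intervals yields a distance-1 neighborhood cover of G with weak diameter at most 4 and overlap at most k + 1. -/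
/-! The parts of the greedy partition are consecutive intervals, each inside some `N[z]`, so
every cluster `N[I]` lies within distance 2 of `z`. A vertex `v` lies in `N[I]` iff `I` meets
`N[v]`. If a part `I` meets `N[v]` and is not the last part, some crossing of `N[v]` starts in
`I`: either `I` contains a non-neighbour of `v` and, being an interval, a crossing, or
`I ⊆ N[v]`, and then by maximality of `I` the next element lies outside `N[v]`. So at most
`crossNum N[v] + 1` clusters contain `v`. -/

variable {V : Type} [Fintype V] [DecidableEq V] [LinearOrder V]

/-- The closed neighborhood `N[v]` of a vertex, as a finset. -/
def cnbhd (G : SimpleGraph V) [DecidableRel G.Adj] (v : V) : Finset V :=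
  insert v (G.neighborFinset v)

/-- The crossing number of a set `X` with respect to the linear order on `V`:
the number of pairs `(u, u')` where `u'` is the immediate successor of `u`
and exactly one of `u, u'` belongs to `X`. -/
def crossNum (X : Finset V) : ℕ :=
  (Finset.univ.filter (fun p : V × V =>
    (p.1 < p.2 ∧ ∀ w : V, p.1 < w → p.2 ≤ w) ∧ Xor (p.1 ∈ X) (p.2 ∈ X))).card

/-- The largest prefix (in the linear order) of a finset `R` that is compact,
i.e. contained in the closed neighborhood of some vertex. -/
def lcp (G : SimpleGraph V) [DecidableRel G.Adj] (R : Finset V) : Finset V :=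
  ((R.sort (· ≤ ·)).take (Nat.findGreatest
    (fun m => ∃ u : V, ((R.sort (· ≤ ·)).take m).toFinset ⊆ cnbhd G u) R.card)).toFinset

/-- The greedy partition: repeatedly take the largest compact prefix of the
remaining elements (fuel-based recursion; each step removes a nonempty prefix). -/
def greedyAux (G : SimpleGraph V) [DecidableRel G.Adj] : ℕ → Finset V → List (Finset V)
  | 0, _ => []
  | fuel + 1, R => if R = ∅ then [] else lcp G R :: greedyAux G fuel (R \ lcp G R)

/-- The neighborhood cover obtained from the greedy partition, consisting of the
clusters `N[I]` for the parts `I` of the greedy partition. -/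
def greedyCover (G : SimpleGraph V) [DecidableRel G.Adj] : List (Finset V) :=
  (greedyAux G (Fintype.card V) Finset.univ).map (fun I => I.biUnion (cnbhd G))

open Finset

section SortedPrefix

variable {α : Type*} [DecidableEq α] [LinearOrder α]

def sortedPrefix (s : Finset α) (m : ℕ) : Finset α :=
  ((s.sort (· ≤ ·)).take m).toFinset

theorem sortedPrefix_subset (s : Finset α) (m : ℕ) : sortedPrefix s m ⊆ s := fun _ hx =>
  mem_sort (· ≤ ·) |>.mp (List.take_subset _ _ (List.mem_toFinset.mp hx))

theorem card_sortedPrefix (s : Finset α) (m : ℕ) : #(sortedPrefix s m) = min m #s := by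
  rw [sortedPrefix, List.toFinset_card_of_nodup ((sort_nodup _ _).sublist (List.take_sublist _ _)),
    List.length_take, length_sort]

theorem lt_of_mem_sortedPrefix_of_mem_sdiff {s : Finset α} {m : ℕ} {x y : α}
    (hx : x ∈ sortedPrefix s m) (hy : y ∈ s \ sortedPrefix s m) : x < y := by
  obtain ⟨hys, hyp⟩ := mem_sdiff.mp hy
  have hsorted := List.sortedLT_iff_pairwise.mp (sortedLT_sort s)
  rw [← List.take_append_drop m (s.sort (· ≤ ·)), List.pairwise_append] at hsorted
  refine hsorted.2.2 x (List.mem_toFinset.mp hx) y ?_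
  have hy' : y ∈ s.sort (· ≤ ·) := mem_sort _ |>.mpr hys
  rw [← List.take_append_drop m (s.sort (· ≤ ·)), List.mem_append] at hy'
  exact hy'.resolve_left (mt List.mem_toFinset.mpr hyp)

theorem sortedPrefix_add_one {s : Finset α} {m : ℕ} (h : (s \ sortedPrefix s m).Nonempty) :
    sortedPrefix s (m + 1) = insert ((s \ sortedPrefix s m).min' h) (sortedPrefix s m) := by
  set l := s.sort (· ≤ ·)
  have hm : m < l.length := by
    rw [length_sort]
    by_contra! hm
    have : sortedPrefix s m = s := eq_of_subset_of_card_le (sortedPrefix_subset s m) <| by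
      rw [card_sortedPrefix]; omega
    simp [this] at h
  have hsucc : sortedPrefix s (m + 1) = insert l[m] (sortedPrefix s m) := by
    rw [sortedPrefix, List.take_add_one, List.getElem?_eq_getElem hm, List.toFinset_append]
    simp [sortedPrefix, l]
  have hnew : l[m] ∈ s \ sortedPrefix s m := by
    refine mem_sdiff.mpr ⟨mem_sort _ |>.mp (List.getElem_mem _), fun hmem => ?_⟩
    have hnodup := (sort_nodup s (· ≤ ·)).sublist (List.take_sublist (m + 1) l)
    rw [List.take_add_one, List.getElem?_eq_getElem hm] at hnodup
    exact List.disjoint_of_nodup_append hnodup (List.mem_toFinset.mp hmem)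
      (List.mem_singleton_self _)
  suffices l[m] = (s \ sortedPrefix s m).min' h by rw [hsucc, this]
  refine le_antisymm ?_ (min'_le _ _ hnew)
  have hmin := min'_mem _ h
  by_cases hin : (s \ sortedPrefix s m).min' h ∈ sortedPrefix s (m + 1)
  · rw [hsucc, mem_insert] at hin
    exact (hin.resolve_right (mem_sdiff.mp hmin).2).ge
  · refine (lt_of_mem_sortedPrefix_of_mem_sdiff (s := s) (m := m + 1) ?_ ?_).le
    · rw [hsucc]; exact mem_insert_self _ _
    · exact mem_sdiff.mpr ⟨(mem_sdiff.mp hmin).1, hin⟩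

end SortedPrefix

theorem exists_covBy_of_le_of_not {α : Type*} [Fintype α] [LinearOrder α] {P : α → Prop}
    {a b : α} (hab : a ≤ b) (ha : P a) (hb : ¬ P b) :
    ∃ u u', a ≤ u ∧ u' ≤ b ∧ u ⋖ u' ∧ P u ∧ ¬ P u' := by
  classical
  obtain ⟨u, hu, hmax⟩ :=
    (univ.filter fun y => a ≤ y ∧ y ≤ b ∧ P y).exists_max_image id ⟨a, by simp [hab, ha]⟩
  simp only [mem_filter, mem_univ, true_and, id] at hu hmax
  obtain ⟨hau, hub, hPu⟩ := hu
  obtain ⟨u', huu', hu'b⟩ := exists_covBy_le_of_lt (hub.lt_of_ne (by rintro rfl; exact hb hPu))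
  exact ⟨u, u', hau, hu'b, huu', hPu, fun hPu' =>
    (hmax u' ⟨hau.trans huu'.le, hu'b, hPu'⟩).not_gt huu'.lt⟩

open scoped Classical in
noncomputable def crossingsFrom (R X : Finset V) : Finset (V × V) :=
  univ.filter fun p => p.1 ∈ R ∧ p.1 ⋖ p.2 ∧ Xor (p.1 ∈ X) (p.2 ∈ X)

theorem mem_crossingsFrom {R X : Finset V} {p : V × V} :
    p ∈ crossingsFrom R X ↔ p.1 ∈ R ∧ p.1 ⋖ p.2 ∧ Xor (p.1 ∈ X) (p.2 ∈ X) := by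
  simp [crossingsFrom]

theorem card_crossingsFrom_univ (X : Finset V) : #(crossingsFrom univ X) = crossNum X := by
  unfold crossingsFrom crossNum
  congr 1
  ext p
  simp only [mem_filter, mem_univ, true_and, CovBy, not_lt]

theorem crossingsFrom_mono {R R' : Finset V} (h : R' ⊆ R) (X : Finset V) :
    crossingsFrom R' X ⊆ crossingsFrom R X := by
  intro p
  simp only [mem_crossingsFrom]
  exact fun hp => ⟨h hp.1, hp.2⟩

theorem crossingsFrom_nonempty_of_ordConnected {I X : Finset V} (hI : (I : Set V).OrdConnected)
    {a b : V} (ha : a ∈ I) (hb : b ∈ I) (haX : a ∈ X) (hbX : b ∉ X) :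
    (crossingsFrom I X).Nonempty := by
  have hmem {u u' : V} (hu : u ∈ Set.Icc a b ∪ Set.Icc b a) (huu' : u ⋖ u')
      (hcross : Xor (u ∈ X) (u' ∈ X)) : (u, u') ∈ crossingsFrom I X := by
    refine mem_crossingsFrom.mpr ⟨?_, huu', hcross⟩
    rcases hu with hu | hu
    exacts [hI.out ha hb hu, hI.out hb ha hu]
  rcases le_total a b with hab | hba
  · obtain ⟨u, u', hau, hu'b, huu', hu, hu'⟩ := exists_covBy_of_le_of_not hab haX hbX
    exact ⟨_, hmem (.inl ⟨hau, huu'.le.trans hu'b⟩) huu' (.inl ⟨hu, hu'⟩)⟩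
  · obtain ⟨u, u', hbu, hu'a, huu', hu, hu'⟩ :=
      exists_covBy_of_le_of_not (P := (· ∉ X)) hba hbX (not_not.mpr haX)
    exact ⟨_, hmem (.inr ⟨hbu, huu'.le.trans hu'a⟩) huu' (.inr ⟨not_not.mp hu', hu⟩)⟩

section Greedy

variable (G : SimpleGraph V) [DecidableRel G.Adj] {R : Finset V}

theorem lcp_eq_sortedPrefix : lcp G R =
    sortedPrefix R (Nat.findGreatest (fun m => ∃ u, sortedPrefix R m ⊆ cnbhd G u) #R) :=
  rfl

theorem lcp_subset : lcp G R ⊆ R := sortedPrefix_subset _ _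

theorem exists_sortedPrefix_one_subset_cnbhd (hR : R.Nonempty) :
    ∃ u, sortedPrefix R 1 ⊆ cnbhd G u := by
  obtain ⟨a, ha⟩ := card_eq_one.mp <| (card_sortedPrefix R 1).trans (min_eq_left hR.card_pos)
  exact ⟨a, ha ▸ singleton_subset_iff.mpr (mem_insert_self a _)⟩

theorem exists_lcp_subset_cnbhd (hR : R.Nonempty) : ∃ u, lcp G R ⊆ cnbhd G u :=
  Nat.findGreatest_spec (P := fun m => ∃ u, sortedPrefix R m ⊆ cnbhd G u) hR.card_pos
    (exists_sortedPrefix_one_subset_cnbhd G hR)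

theorem lcp_nonempty (hR : R.Nonempty) : (lcp G R).Nonempty := by
  have := Nat.le_findGreatest (P := fun m => ∃ u, sortedPrefix R m ⊆ cnbhd G u) hR.card_pos
    (exists_sortedPrefix_one_subset_cnbhd G hR)
  rw [← card_pos, lcp_eq_sortedPrefix, card_sortedPrefix]
  exact lt_min this hR.card_pos

theorem lt_of_mem_lcp_of_mem_sdiff {x y : V} (hx : x ∈ lcp G R) (hy : y ∈ R \ lcp G R) :
    x < y :=
  lt_of_mem_sortedPrefix_of_mem_sdiff hx hy

theorem not_insert_min'_sdiff_lcp_subset_cnbhd (h : (R \ lcp G R).Nonempty) (u : V) :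
    ¬ insert ((R \ lcp G R).min' h) (lcp G R) ⊆ cnbhd G u := by
  have hlt : Nat.findGreatest (fun m => ∃ u, sortedPrefix R m ⊆ cnbhd G u) #R < #R := by
    refine (Nat.findGreatest_le _).lt_of_ne fun heq => ?_
    have : lcp G R = R := eq_of_subset_of_card_le (lcp_subset G) <| by
      rw [lcp_eq_sortedPrefix, card_sortedPrefix, heq, min_self]
    simp [this] at h
  have hnext :
      sortedPrefix R (Nat.findGreatest (fun m => ∃ u, sortedPrefix R m ⊆ cnbhd G u) #R + 1) =
        insert ((R \ lcp G R).min' h) (lcp G R) :=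
    sortedPrefix_add_one h
  exact fun hsub => Nat.findGreatest_is_greatest (Nat.lt_succ_self _) hlt ⟨u, hnext ▸ hsub⟩

theorem IsUpperSet.sdiff_lcp (hR : IsUpperSet (R : Set V)) :
    IsUpperSet ((R \ lcp G R : Finset V) : Set V) := by
  intro x y hxy hx
  rw [mem_coe, mem_sdiff] at hx ⊢
  exact ⟨hR hxy hx.1, fun hy => (lt_of_mem_lcp_of_mem_sdiff G hy (mem_sdiff.mpr hx)).not_ge hxy⟩

theorem IsUpperSet.ordConnected_lcp (hR : IsUpperSet (R : Set V)) :
    (lcp G R : Set V).OrdConnected := by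
  refine ⟨fun x hx z hz y ⟨hxy, hyz⟩ => by_contra fun hy => ?_⟩
  have hyR : y ∈ R := hR hxy (lcp_subset G hx)
  exact (lt_of_mem_lcp_of_mem_sdiff G hz (mem_sdiff.mpr ⟨hyR, hy⟩)).not_ge hyz

theorem IsUpperSet.crossingsFrom_lcp_nonempty (hR : IsUpperSet (R : Set V))
    (hrest : (R \ lcp G R).Nonempty) {v : V} (hv : (lcp G R ∩ cnbhd G v).Nonempty) :
    (crossingsFrom (lcp G R) (cnbhd G v)).Nonempty := by
  obtain ⟨a, ha⟩ := hv
  rw [mem_inter] at ha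
  by_cases hsub : lcp G R ⊆ cnbhd G v
  · have hI := lcp_nonempty G (hrest.mono sdiff_subset)
    set x := (lcp G R).max' hI
    set y := (R \ lcp G R).min' hrest
    have hx : x ∈ lcp G R := max'_mem _ _
    have hxy : x ⋖ y := by
      refine ⟨lt_of_mem_lcp_of_mem_sdiff G hx (min'_mem _ _), fun z hxz hzy => ?_⟩
      have hz : z ∉ lcp G R := fun hz => (le_max' _ z hz).not_gt hxz
      exact (min'_le _ z (mem_sdiff.mpr ⟨hR hxz.le (lcp_subset G hx), hz⟩)).not_gt hzy
    have hy : y ∉ cnbhd G v := fun hy =>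
      not_insert_min'_sdiff_lcp_subset_cnbhd G hrest v (insert_subset hy hsub)
    exact ⟨(x, y), mem_crossingsFrom.mpr ⟨hx, hxy, .inl ⟨hsub hx, hy⟩⟩⟩
  · obtain ⟨b, hb, hbv⟩ := not_subset.mp hsub
    exact crossingsFrom_nonempty_of_ordConnected (hR.ordConnected_lcp G) ha.1 hb ha.2 hbv

@[simp] theorem greedyAux_empty (n : ℕ) : greedyAux G n ∅ = [] := by
  cases n <;> simp [greedyAux]

theorem greedyAux_succ (hR : R.Nonempty) (n : ℕ) :
    greedyAux G (n + 1) R = lcp G R :: greedyAux G n (R \ lcp G R) := by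
  rw [greedyAux, if_neg hR.ne_empty]

theorem exists_subset_cnbhd_of_mem_greedyAux {n : ℕ} {I : Finset V}
    (hI : I ∈ greedyAux G n R) : ∃ u, I ⊆ cnbhd G u := by
  induction n generalizing R with
  | zero => simp [greedyAux] at hI
  | succ n ih =>
    obtain rfl | hR := R.eq_empty_or_nonempty
    · simp at hI
    rw [greedyAux_succ G hR, List.mem_cons] at hI
    obtain rfl | hI := hI
    exacts [exists_lcp_subset_cnbhd G hR, ih hI]

theorem exists_mem_greedyAux {n : ℕ} (hn : #R ≤ n) {x : V} (hx : x ∈ R) :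
    ∃ I ∈ greedyAux G n R, x ∈ I := by
  induction n generalizing R with
  | zero => simp_all
  | succ n ih =>
    have hR : R.Nonempty := ⟨x, hx⟩
    rw [greedyAux_succ G hR]
    by_cases hxI : x ∈ lcp G R
    · exact ⟨_, List.mem_cons_self, hxI⟩
    have hcard : #(R \ lcp G R) ≤ n := by
      have := card_lt_card (sdiff_ssubset (lcp_subset G) (lcp_nonempty G hR))
      omega
    obtain ⟨I, hI, hxI'⟩ := ih hcard (mem_sdiff.mpr ⟨hx, hxI⟩)
    exact ⟨I, List.mem_cons_of_mem _ hI, hxI'⟩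

theorem countP_greedyAux_le {n : ℕ} (hR : IsUpperSet (R : Set V)) (v : V) :
    (greedyAux G n R).countP (fun I => (I ∩ cnbhd G v).Nonempty) ≤
      #(crossingsFrom R (cnbhd G v)) + 1 := by
  induction n generalizing R with
  | zero => simp [greedyAux]
  | succ n ih =>
    obtain rfl | hRne := R.eq_empty_or_nonempty
    · simp
    rw [greedyAux_succ G hRne, List.countP_cons]
    have hrest := ih (hR.sdiff_lcp G)
    have hmono :=
      card_le_card (crossingsFrom_mono (sdiff_subset (s := R) (t := lcp G R)) (cnbhd G v))
    by_cases hv : (lcp G R ∩ cnbhd G v).Nonempty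
    · obtain hempty | hne := (R \ lcp G R).eq_empty_or_nonempty
      · simp [hempty, hv]
      obtain ⟨p, hp⟩ := hR.crossingsFrom_lcp_nonempty G hne hv
      have hlt :
          #(crossingsFrom (R \ lcp G R) (cnbhd G v)) < #(crossingsFrom R (cnbhd G v)) := by
        refine card_lt_card <| (ssubset_iff_of_subset (crossingsFrom_mono sdiff_subset _)).mpr
          ⟨p, crossingsFrom_mono (lcp_subset G) _ hp, fun hp' => ?_⟩
        exact (mem_sdiff.mp (mem_crossingsFrom.mp hp').1).2 (mem_crossingsFrom.mp hp).1
      simp only [hv, decide_true, if_true]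
      omega
    · simp only [hv, decide_false, Bool.false_eq_true, if_false]
      omega

end Greedy

section Neighborhoods

variable {W : Type} [Fintype W] [DecidableEq W] (G : SimpleGraph W) [DecidableRel G.Adj]

theorem mem_cnbhd_comm {u v : W} : u ∈ cnbhd G v ↔ v ∈ cnbhd G u := by
  simp only [cnbhd, mem_insert, SimpleGraph.mem_neighborFinset, eq_comm (a := u), G.adj_comm]

theorem mem_biUnion_cnbhd_iff {I : Finset W} {v : W} :
    v ∈ I.biUnion (cnbhd G) ↔ (I ∩ cnbhd G v).Nonempty := by
  simp only [mem_biUnion, Finset.Nonempty, mem_inter, mem_cnbhd_comm G (u := v)]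

theorem exists_walk_of_mem_biUnion_cnbhd {I : Finset W} {z u : W} (hI : I ⊆ cnbhd G z)
    (hu : u ∈ I.biUnion (cnbhd G)) : ∃ p : G.Walk z u, p.length ≤ 2 := by
  have walk {a b : W} (h : b ∈ cnbhd G a) : ∃ p : G.Walk a b, p.length ≤ 1 := by
    rcases mem_insert.mp h with rfl | h
    exacts [⟨.nil, zero_le_one⟩, ⟨(G.mem_neighborFinset a b |>.mp h).toWalk, le_rfl⟩]
  obtain ⟨w, hw, huw⟩ := mem_biUnion.mp hu
  obtain ⟨p, hp⟩ := walk (hI hw)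
  obtain ⟨q, hq⟩ := walk huw
  exact ⟨p.append q, by rw [SimpleGraph.Walk.length_append]; omega⟩

theorem reachable_and_dist_le_four {I : Finset W} {z u v : W} (hI : I ⊆ cnbhd G z)
    (hu : u ∈ I.biUnion (cnbhd G)) (hv : v ∈ I.biUnion (cnbhd G)) :
    G.Reachable u v ∧ G.dist u v ≤ 4 := by
  obtain ⟨p, hp⟩ := exists_walk_of_mem_biUnion_cnbhd G hI hu
  obtain ⟨q, hq⟩ := exists_walk_of_mem_biUnion_cnbhd G hI hv
  refine ⟨⟨p.reverse.append q⟩, (SimpleGraph.dist_le (p.reverse.append q)).trans ?_⟩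
  rw [SimpleGraph.Walk.length_append, SimpleGraph.Walk.length_reverse]
  omega

end Neighborhoods

/-- if the closed neighborhoods of a graph `G` form a set system with
respect to which the linear order on `V` has crossing number `k`, then the greedy
partition of `V` into maximal compact prefix intervals yields a distance-1
neighborhood cover of `G` with weak diameter at most `4` and overlap at most `k + 1`. -/
theorem stmt_6 (G : SimpleGraph V) [DecidableRel G.Adj] (k : ℕ)
    (hcross : Finset.univ.sup (fun v => crossNum (cnbhd G v)) = k) :
    (∀ u : V, ∃ C ∈ greedyCover G, cnbhd G u ⊆ C) ∧
    (∀ C ∈ greedyCover G, ∀ u ∈ C, ∀ v ∈ C, G.Reachable u v ∧ G.dist u v ≤ 4) ∧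
    (∀ v : V, ((greedyCover G).countP (fun C => decide (v ∈ C))) ≤ k + 1) := by
  refine ⟨fun u => ?_, fun C hC u hu v hv => ?_, fun v => ?_⟩
  · obtain ⟨I, hI, huI⟩ := exists_mem_greedyAux G (card_univ (α := V)).le (mem_univ u)
    exact ⟨_, List.mem_map_of_mem hI, subset_biUnion_of_mem _ huI⟩
  · obtain ⟨I, hI, rfl⟩ := List.mem_map.mp hC
    obtain ⟨z, hz⟩ := exists_subset_cnbhd_of_mem_greedyAux G hI
    exact reachable_and_dist_le_four G hz hu hv
  · have hk : crossNum (cnbhd G v) ≤ k :=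
      hcross ▸ le_sup (f := fun v => crossNum (cnbhd G v)) (mem_univ v)
    have hcount := countP_greedyAux_le G (n := Fintype.card V)
      (coe_univ (α := V) ▸ isUpperSet_univ) v
    rw [card_crossingsFrom_univ] at hcount
    rw [greedyCover, List.countP_map]
    simp only [Function.comp_def, mem_biUnion_cnbhd_iff]
    omega
end

section
/- There is a 1-flip of the rook graph R_{n²} of order n² that contains the 2-web W²_n of order n as an induced subgraph. Concretely, flipping the set V = {(1, i) : i ∈ [n]} with itself in R_{n²} produces a graph in which the vertices V together with vertices (f(S), i), (f(S), j) for each 2-element set S = {i, j} ⊆ [n] (for any injection f : binom([n], 2) → [n²] \ {1}) induce a copy of W²_n. -/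
/-- Ordered pairs `{i, j}` with `i < j`, indexing the edges of the clique `K_n`. -/
abbrev PairT (n : ℕ) := {p : Fin n × Fin n // p.1 < p.2}

/-- Vertices of the 2-web `W²_n`: native vertices (left) and, for each pair
`S = {i, j}` with `i < j`, two subdivision vertices `(S, false)` (near `i`) and
`(S, true)` (near `j`). -/
abbrev WebV (n : ℕ) := Fin n ⊕ (PairT n × Bool)

/-- The native endpoint associated to a subdivision vertex. -/
def ep {n : ℕ} (x : PairT n × Bool) : Fin n :=
  if x.2 then x.1.1.2 else x.1.1.1

/-- Adjacency in the 2-web `W²_n`: each edge `{i,j}` of `K_n` is replaced by the path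
`i, (S,false), (S,true), j`, and the neighborhood of each native vertex is a clique. -/
def webAdj {n : ℕ} : WebV n → WebV n → Prop
  | .inl _, .inl _ => False
  | .inl i, .inr x => ep x = i
  | .inr x, .inl i => ep x = i
  | .inr x, .inr y => x ≠ y ∧ (x.1 = y.1 ∨ ep x = ep y)

/-- Adjacency in the rook graph: exactly one coordinate agrees. -/
def rookAdj {m : ℕ} (p q : Fin m × Fin m) : Prop :=
  (p.1 = q.1 ∧ p.2 ≠ q.2) ∨ (p.1 ≠ q.1 ∧ p.2 = q.2)

/-- The flip set `V = {(1, i) : i ∈ [n]}` (using `0` as the distinguished index). -/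
def inFlipSet (n : ℕ) {m : ℕ} (p : Fin m × Fin m) : Prop :=
  (p.1 : ℕ) = 0 ∧ (p.2 : ℕ) < n

/-- Adjacency in the 1-flip of the rook graph obtained by complementing the
adjacency within `V × V` (off-diagonal). -/
def flipAdj (n : ℕ) {m : ℕ} (p q : Fin m × Fin m) : Prop :=
  p ≠ q ∧ (rookAdj p q ↔ ¬ (inFlipSet n p ∧ inFlipSet n q))

/-- The map embedding the 2-web `W²_n` into the flipped rook graph `R_{n²}`:
native `i ↦ (1, i)` and the subdivision vertices of the pair `S` go to
`(f S, i)` and `(f S, j)`. -/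
def emb (n : ℕ) (hn : 1 ≤ n) (f : PairT n → Fin (n ^ 2)) :
    WebV n → Fin (n ^ 2) × Fin (n ^ 2)
  | .inl i => (⟨0, pow_pos (by omega) 2⟩, Fin.castLE (Nat.le_self_pow two_ne_zero n) i)
  | .inr x => (f x.1, Fin.castLE (Nat.le_self_pow two_ne_zero n) (ep x))

lemma ep_key {n : ℕ} {x y : PairT n × Bool} (h1 : x.1 = y.1) (h2 : ep x = ep y) : x = y := by
  obtain ⟨S, bx⟩ := x
  obtain ⟨T, by'⟩ := y
  cases h1
  have hlt := S.2
  cases bx <;> cases by' <;> simp_all [ep, Fin.ext_iff] <;> omega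

lemma castLE_inj' {n : ℕ} {i j : Fin n} (h : Fin.castLE (Nat.le_self_pow two_ne_zero n) i
    = Fin.castLE (Nat.le_self_pow two_ne_zero n) j) : i = j :=
  Fin.castLE_injective _ h

/-- flipping the set `V = {(1,i) : i ∈ [n]}` with itself in the rook graph
`R_{n²}` produces a graph in which, for any injection `f` from the 2-element subsets of
`[n]` into `[n²] \ {1}`, the vertices `V` together with the vertices `(f S, i), (f S, j)`
for `S = {i,j}` induce a copy of the 2-web `W²_n`; in particular some 1-flip of `R_{n²}`
contains `W²_n` as an induced subgraph. -/
theorem stmt_9 (n : ℕ) (hn : 1 ≤ n) (f : PairT n → Fin (n ^ 2))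
    (hf : Function.Injective f) (hf0 : ∀ S : PairT n, (f S : ℕ) ≠ 0) :
    Function.Injective (emb n hn f) ∧
    ∀ u v : WebV n, webAdj u v ↔ flipAdj n (emb n hn f u) (emb n hn f v) := by
  have hfne : ∀ S : PairT n, f S ≠ ⟨0, pow_pos (by omega) 2⟩ := by
    intro S h
    exact hf0 S (congrArg Fin.val h)
  constructor
  · intro u v h
    cases u with
    | inl i =>
      cases v with
      | inl j =>
        simp only [emb, Prod.mk.injEq] at h
        exact congrArg _ (castLE_inj' h.2)
      | inr y =>
        simp only [emb, Prod.mk.injEq] at h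
        exact absurd (congrArg Fin.val h.1.symm) (hf0 y.1)
    | inr x =>
      cases v with
      | inl j =>
        simp only [emb, Prod.mk.injEq] at h
        exact absurd (congrArg Fin.val h.1) (hf0 x.1)
      | inr y =>
        simp only [emb, Prod.mk.injEq] at h
        exact congrArg _ (ep_key (hf h.1) (castLE_inj' h.2))
  · intro u v
    cases u with
    | inl i =>
      cases v with
      | inl j =>
        simp only [webAdj, false_iff]
        rintro ⟨hne, hiff⟩
        have hij : i ≠ j := by
          intro h; exact hne (by simp [emb, h])
        exact hiff.mp (Or.inl ⟨rfl, fun h => hij (castLE_inj' h)⟩)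
          ⟨⟨rfl, by simp [emb, i.isLt]⟩, ⟨rfl, by simp [emb, j.isLt]⟩⟩
      | inr y =>
        simp only [webAdj]
        constructor
        · intro h
          refine ⟨?_, ?_⟩
          · intro he
            exact hfne y.1 ((Prod.ext_iff.mp he).1.symm)
          · constructor
            · intro _ hfs
              exact hfne y.1 (Fin.ext hfs.2.1)
            · intro _
              exact Or.inr ⟨fun he => hfne y.1 he.symm, congrArg (Fin.castLE (Nat.le_self_pow two_ne_zero n)) h.symm⟩
        · rintro ⟨hne, hiff⟩
          have hr := hiff.mpr (fun hfs => hfne y.1 (Fin.ext hfs.2.1))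
          rcases hr with ⟨h1, _⟩ | ⟨_, h2⟩
          · exact absurd h1.symm (hfne y.1)
          · exact (castLE_inj' h2).symm
    | inr x =>
      cases v with
      | inl j =>
        simp only [webAdj]
        constructor
        · intro h
          refine ⟨?_, ?_⟩
          · intro he
            exact hfne x.1 ((Prod.ext_iff.mp he).1)
          · constructor
            · intro _ hfs
              exact hfne x.1 (Fin.ext hfs.1.1)
            · intro _
              exact Or.inr ⟨hfne x.1, congrArg (Fin.castLE (Nat.le_self_pow two_ne_zero n)) h⟩
        · rintro ⟨hne, hiff⟩
          have hr := hiff.mpr (fun hfs => hfne x.1 (Fin.ext hfs.1.1))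
          rcases hr with ⟨h1, _⟩ | ⟨_, h2⟩
          · exact absurd h1 (hfne x.1)
          · exact castLE_inj' h2
      | inr y =>
        simp only [webAdj]
        have hnfs : ¬ (inFlipSet n (emb n hn f (.inr x)) ∧ inFlipSet n (emb n hn f (.inr y))) :=
          fun hfs => hfne x.1 (Fin.ext hfs.1.1)
        constructor
        · rintro ⟨hxy, hor⟩
          have hne : emb n hn f (.inr x) ≠ emb n hn f (.inr y) := by
            intro he
            obtain ⟨h1, h2⟩ := Prod.ext_iff.mp he
            exact hxy (ep_key (hf h1) (castLE_inj' h2))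
          refine ⟨hne, iff_of_true ?_ hnfs⟩
          rcases hor with h1 | h2
          · refine Or.inl ⟨congrArg f h1, fun he => hxy (ep_key h1 (castLE_inj' he))⟩
          · refine Or.inr ⟨fun he => hxy (ep_key (hf he) h2), congrArg (Fin.castLE (Nat.le_self_pow two_ne_zero n)) h2⟩
        · rintro ⟨hne, hiff⟩
          have hr := hiff.mpr hnfs
          refine ⟨fun he => hne (by rw [he]), ?_⟩
          rcases hr with ⟨h1, _⟩ | ⟨_, h2⟩
          · exact Or.inl (hf h1)
          · exact Or.inr (castLE_inj' h2)
end

section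
/- Grid Ramsey theorem: for all k, n ∈ ℕ there exists N ∈ ℕ such that for every coloring χ : ([N] × [N])² → [k] of pairs of grid points, there exist subsets I₁, I₂ ⊆ [N] with |I₁| = |I₂| = n such that the restriction of χ to pairs from I₁ × I₂ is homogeneous: χ((a₁,a₂),(b₁,b₂)) depends only on the pair (otp(a₁,b₁), otp(a₂,b₂)), where otp(x,y) ∈ {<, =, >} records the order relation of x and y. -/
/-!
Colour each increasing 4-tuple `u` of `[N]` by the function sending a pair of atomic types
`(o₁, o₂)` to the colour of the pair of grid points whose first coordinates are read off
`u 0 < u 1` and whose second coordinates are read off `u 2 < u 3` according to `o₁` and `o₂`.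
By the hypergraph Ramsey theorem there is a large set `H` on which this colouring is constant.
Split `H` into a lower half `J₁` and an upper half `J₂` and drop their maxima to get `I₁` and
`I₂`: a pair of grid points over `I₁ × I₂` is then read off some increasing 4-tuple from `H`
in the pattern given by its atomic type (a removed maximum fills the slot of an equal
coordinate), so its colour depends on the atomic type only.

The Ramsey theorem is proved by the usual induction on the arity: greedily build a long set
on which the colour of a tuple depends only on its least entry, then apply pigeonhole.
-/

open Finset

universe u v

variable {C : Type v}

theorem Finset.exists_subsets_lt_of_card_eq_add {α : Type u} [LinearOrder α] {H : Finset α}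
    {m₁ m₂ : ℕ} (h : #H = m₁ + m₂) : ∃ J₁ J₂ : Finset α, J₁ ⊆ H ∧ J₂ ⊆ H ∧ #J₁ = m₁ ∧ #J₂ = m₂ ∧
      ∀ x ∈ J₁, ∀ y ∈ J₂, x < y := by
  set φ := H.orderEmbOfFin h
  refine ⟨univ.map ((Fin.castAddOrderEmb m₂).trans φ).toEmbedding,
    univ.map ((Fin.natAddOrderEmb m₁).trans φ).toEmbedding, ?_, ?_, by simp, by simp, ?_⟩
  · simp [subset_iff, φ]
  · simp [subset_iff, φ]
  · simp only [mem_map, mem_univ, true_and, forall_exists_index]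
    rintro _ i rfl _ j rfl
    exact φ.strictMono <| Fin.lt_def.mpr <| by
      simp [Fin.castAddOrderEmb, Fin.natAddOrderEmb]; omega

theorem StrictMono.finAppend {α : Type u} [Preorder α] {m n : ℕ} {u : Fin m → α}
    {v : Fin n → α} (hu : StrictMono u) (hv : StrictMono v) (huv : ∀ i j, u i < v j) :
    StrictMono (Fin.append u v) := by
  intro i j hij
  cases i using Fin.addCases <;> cases j using Fin.addCases <;>
    simp only [Fin.append_left, Fin.append_right] at hij ⊢
  · exact hu ((Fin.strictMono_castAdd n).lt_iff_lt.mp hij)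
  · exact huv _ _
  · exact absurd (Fin.lt_def.mp hij) (by simp; omega)
  · exact hv ((Fin.strictMono_natAdd m).lt_iff_lt.mp hij)

section Homogeneity

variable {α : Type u} [Preorder α] {r : ℕ}

def HomogeneousOn (f : (Fin r → α) → C) (H : Set α) : Prop :=
  ∀ ⦃u v : Fin r → α⦄, StrictMono u → StrictMono v → (∀ i, u i ∈ H) → (∀ i, v i ∈ H) →
    f u = f v

theorem HomogeneousOn.mono {f : (Fin r → α) → C} {H K : Set α} (h : HomogeneousOn f H)
    (hKH : K ⊆ H) : HomogeneousOn f K :=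
  fun _ _ hu hv huK hvK => h hu hv (fun i => hKH (huK i)) (fun i => hKH (hvK i))

theorem homogeneousOn_zero (f : (Fin 0 → α) → C) (H : Set α) : HomogeneousOn f H :=
  fun u v _ _ _ _ => congrArg f (Subsingleton.elim u v)

def EndHomogeneousOn (f : (Fin (r + 1) → α) → C) (P : Set α) : Prop :=
  ∀ a ∈ P, HomogeneousOn (fun u => f (Fin.cons a u)) (P ∩ Set.Ioi a)

end Homogeneity

def RamseyBound (C : Type v) (r m N : ℕ) : Prop :=
  ∀ {α : Type u} [LinearOrder α] (f : (Fin r → α) → C) (A : Finset α), N ≤ #A →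
    ∃ H ⊆ A, #H = m ∧ HomogeneousOn f H

theorem exists_endHomogeneousOn {r : ℕ} (hr : ∀ m, ∃ N, RamseyBound.{u} C r m N) (j : ℕ) :
    ∃ N, ∀ {α : Type u} [LinearOrder α] (f : (Fin (r + 1) → α) → C) (A : Finset α),
      N ≤ #A → ∃ P ⊆ A, #P = j ∧ EndHomogeneousOn f P := by
  induction j with
  | zero => exact ⟨0, fun _ _ _ => ⟨∅, empty_subset _, card_empty, by simp [EndHomogeneousOn]⟩⟩
  | succ j ih =>
    obtain ⟨Nj, hNj⟩ := ih
    obtain ⟨N, hN⟩ := hr Nj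
    refine ⟨N + 1, fun {α} _ f A hA => ?_⟩
    classical
    have hAne : A.Nonempty := card_pos.mp (by omega)
    set a := A.min' hAne
    have haA : a ∈ A := A.min'_mem hAne
    obtain ⟨B, hBA, hBc, hB⟩ := hN (fun u => f (Fin.cons a u)) (A.erase a)
      (by rw [card_erase_of_mem haA]; omega)
    obtain ⟨P, hPB, hPc, hP⟩ := hNj f B hBc.ge
    have ha_lt : ∀ x ∈ B, a < x := fun x hx =>
      A.min'_lt_of_mem_erase_min' hAne (hBA hx)
    have haP : a ∉ P := fun h => lt_irrefl a (ha_lt a (hPB h))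
    refine ⟨insert a P, insert_subset haA (hPB.trans (hBA.trans (erase_subset _ _))),
      by rw [card_insert_of_notMem haP, hPc], ?_⟩
    intro b hb
    rcases mem_insert.mp hb with rfl | hb
    · refine hB.mono fun x ⟨hx, hbx⟩ => ?_
      rcases mem_insert.mp hx with rfl | hx
      · exact absurd hbx (lt_irrefl _)
      · exact hPB hx
    · refine (hP b hb).mono fun x ⟨hx, hbx⟩ => ⟨?_, hbx⟩
      rcases mem_insert.mp hx with rfl | hx
      · exact absurd ((ha_lt b (hPB hb)).trans hbx) (lt_irrefl _)
      · exact hx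

theorem exists_ramseyBound_succ [Finite C] {r : ℕ} (hr : ∀ m, ∃ N, RamseyBound.{u} C r m N)
    (m : ℕ) : ∃ N, RamseyBound.{u} C (r + 1) m N := by
  classical
  have : Fintype (Set C) := Fintype.ofFinite _
  obtain ⟨N, hN⟩ := exists_endHomogeneousOn hr (Fintype.card (Set C) * m + 1)
  refine ⟨N, fun {α} _ f A hA => ?_⟩
  obtain ⟨P, hPA, hPc, hP⟩ := hN f A hA
  let colours (a : α) : Set C :=
    (fun u => f (Fin.cons a u)) '' {u | StrictMono u ∧ ∀ i, u i ∈ (P : Set α) ∩ Set.Ioi a}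
  have colours_subsingleton : ∀ a ∈ P, (colours a).Subsingleton := by
    rintro a ha _ ⟨u, ⟨hu, huP⟩, rfl⟩ _ ⟨v, ⟨hv, hvP⟩, rfl⟩
    exact hP a ha hu hv huP hvP
  obtain ⟨S, -, hS⟩ := exists_lt_card_fiber_of_mul_lt_card_of_maps_to (s := P) (t := univ)
    (f := colours) (n := m) (fun _ _ => mem_univ _) (by rw [card_univ, hPc]; omega)
  obtain ⟨H, hHS, hHc⟩ := exists_subset_card_eq hS.le
  have hHP : H ⊆ P := hHS.trans (filter_subset _ _)
  have mem_S : ∀ u, StrictMono u → (∀ i, u i ∈ H) → f u ∈ S := by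
    intro u hu huH
    rw [← Fin.cons_self_tail u, Fin.strictMono_cons] at hu
    rw [← (mem_filter.mp (hHS (huH 0))).2, ← Fin.cons_self_tail u]
    exact ⟨Fin.tail u, ⟨hu.2, fun i => ⟨hHP (huH i.succ), hu.1 i⟩⟩, rfl⟩
  refine ⟨H, hHP.trans hPA, hHc, fun u v hu hv huH hvH => ?_⟩
  have hcolour : colours (u 0) = S := (mem_filter.mp (hHS (huH 0))).2
  exact colours_subsingleton (u 0) (hHP (huH 0)) (hcolour ▸ mem_S u hu huH)
    (hcolour ▸ mem_S v hv hvH)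

theorem exists_ramseyBound (C : Type v) [Finite C] (r m : ℕ) :
    ∃ N, RamseyBound.{u} C r m N := by
  induction r generalizing m with
  | zero =>
    refine ⟨m, fun f A hA => ?_⟩
    obtain ⟨H, hHA, hHc⟩ := exists_subset_card_eq hA
    exact ⟨H, hHA, hHc, homogeneousOn_zero f H⟩
  | succ r ih => exact exists_ramseyBound_succ ih m

/-- Positions of `x` and `y` in an increasing pair representing them; when `x = y` the
second entry of the pair is padding. -/
def pairPattern : Ordering → Fin 2 × Fin 2
  | .lt => (0, 1)
  | .eq => (0, 0)
  | .gt => (1, 0)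

section Grid

variable {α : Type u} [LinearOrder α]

theorem exists_strictMono_pairPattern {J : Finset α} (hJ : J.Nonempty) {x y : α}
    (hx : x ∈ J.erase (J.max' hJ)) (hy : y ∈ J.erase (J.max' hJ)) :
    ∃ w : Fin 2 → α, StrictMono w ∧ (∀ i, w i ∈ J) ∧
      w (pairPattern (compare x y)).1 = x ∧ w (pairPattern (compare x y)).2 = y := by
  have hxJ := mem_of_mem_erase hx
  have hyJ := mem_of_mem_erase hy
  rcases lt_trichotomy x y with h | rfl | h
  · exact ⟨![x, y], by simpa using h, by simp [Fin.forall_fin_two, hxJ, hyJ],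
      by simp [compare_lt_iff_lt.mpr h, pairPattern]⟩
  · exact ⟨![x, J.max' hJ], by simpa using J.lt_max'_of_mem_erase_max' hJ hx,
      by simp [Fin.forall_fin_two, hxJ, J.max'_mem hJ], by simp [pairPattern]⟩
  · exact ⟨![y, x], by simpa using h, by simp [Fin.forall_fin_two, hxJ, hyJ],
      by simp [compare_gt_iff_gt.mpr h, pairPattern]⟩

def gridColouring (χ : α × α → α × α → C) (u : Fin (2 + 2) → α) (o : Ordering × Ordering) :
    C :=
  χ (u (Fin.castAdd 2 (pairPattern o.1).1), u (Fin.natAdd 2 (pairPattern o.2).1))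
    (u (Fin.castAdd 2 (pairPattern o.1).2), u (Fin.natAdd 2 (pairPattern o.2).2))

theorem exists_gridColouring_eq (χ : α × α → α × α → C) {J₁ J₂ : Finset α}
    (hJ₁ : J₁.Nonempty) (hJ₂ : J₂.Nonempty) (hJ : ∀ x ∈ J₁, ∀ y ∈ J₂, x < y) {a b : α × α}
    (ha₁ : a.1 ∈ J₁.erase (J₁.max' hJ₁)) (hb₁ : b.1 ∈ J₁.erase (J₁.max' hJ₁))
    (ha₂ : a.2 ∈ J₂.erase (J₂.max' hJ₂)) (hb₂ : b.2 ∈ J₂.erase (J₂.max' hJ₂)) :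
    ∃ u : Fin (2 + 2) → α, StrictMono u ∧ (∀ i, u i ∈ J₁ ∪ J₂) ∧
      gridColouring χ u (compare a.1 b.1, compare a.2 b.2) = χ a b := by
  obtain ⟨w₁, hw₁, hw₁J, hwa₁, hwb₁⟩ := exists_strictMono_pairPattern hJ₁ ha₁ hb₁
  obtain ⟨w₂, hw₂, hw₂J, hwa₂, hwb₂⟩ := exists_strictMono_pairPattern hJ₂ ha₂ hb₂
  refine ⟨Fin.append w₁ w₂, hw₁.finAppend hw₂ fun i j => hJ _ (hw₁J i) _ (hw₂J j),
    fun i => ?_, by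
      simp only [gridColouring, Fin.append_left, Fin.append_right, hwa₁, hwb₁, hwa₂, hwb₂]⟩
  cases i using Fin.addCases <;>
    simp only [Fin.append_left, Fin.append_right, mem_union, hw₁J, hw₂J, true_or, or_true]

def IsGridHomogeneous (χ : α × α → α × α → C) (I₁ I₂ : Finset α) : Prop :=
  ∀ a b a' b' : α × α,
    a.1 ∈ I₁ → b.1 ∈ I₁ → a'.1 ∈ I₁ → b'.1 ∈ I₁ →
    a.2 ∈ I₂ → b.2 ∈ I₂ → a'.2 ∈ I₂ → b'.2 ∈ I₂ →
    compare a.1 b.1 = compare a'.1 b'.1 →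
    compare a.2 b.2 = compare a'.2 b'.2 →
    χ a b = χ a' b'

end Grid

theorem exists_isGridHomogeneous (C : Type v) [Finite C] (n : ℕ) :
    ∃ N, ∀ {α : Type u} [LinearOrder α] (χ : α × α → α × α → C) (A : Finset α), N ≤ #A →
      ∃ I₁ I₂ : Finset α, I₁ ⊆ A ∧ I₂ ⊆ A ∧ #I₁ = n ∧ #I₂ = n ∧ IsGridHomogeneous χ I₁ I₂ := by
  obtain ⟨N, hN⟩ :=
    exists_ramseyBound.{u} (Ordering × Ordering → C) (2 + 2) ((n + 1) + (n + 1))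
  refine ⟨N, fun {α} _ χ A hA => ?_⟩
  obtain ⟨H, hHA, hHc, hH⟩ := hN (gridColouring χ) A hA
  obtain ⟨J₁, J₂, hJ₁H, hJ₂H, hJ₁c, hJ₂c, hJ⟩ := exists_subsets_lt_of_card_eq_add hHc
  have hJ₁ : J₁.Nonempty := card_pos.mp (by omega)
  have hJ₂ : J₂.Nonempty := card_pos.mp (by omega)
  refine ⟨J₁.erase (J₁.max' hJ₁), J₂.erase (J₂.max' hJ₂),
    (erase_subset _ _).trans (hJ₁H.trans hHA), (erase_subset _ _).trans (hJ₂H.trans hHA),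
    by rw [card_erase_of_mem (J₁.max'_mem hJ₁), hJ₁c]; rfl,
    by rw [card_erase_of_mem (J₂.max'_mem hJ₂), hJ₂c]; rfl, ?_⟩
  intro a b a' b' ha₁ hb₁ ha₁' hb₁' ha₂ hb₂ ha₂' hb₂' h₁ h₂
  obtain ⟨u, hu, huJ, hχ⟩ := exists_gridColouring_eq χ hJ₁ hJ₂ hJ ha₁ hb₁ ha₂ hb₂
  obtain ⟨u', hu', hu'J, hχ'⟩ := exists_gridColouring_eq χ hJ₁ hJ₂ hJ ha₁' hb₁' ha₂' hb₂'
  rw [← hχ, ← hχ', h₁, h₂]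
  exact congrFun (hH hu hu' (fun i => union_subset hJ₁H hJ₂H (huJ i))
    (fun i => union_subset hJ₁H hJ₂H (hu'J i))) _

/-- Grid Ramsey theorem: for all `k, n` there is `N` such that for
every coloring `χ` of pairs of points of the `N × N` grid with `k` colors there are
`I₁, I₂ ⊆ [N]` of size `n` such that on pairs of points from `I₁ × I₂` the color of a
pair depends only on its atomic type `(otp(a₁,b₁), otp(a₂,b₂))` (recorded via
`compare`). -/
theorem stmt_10 (k n : ℕ) :
    ∃ N : ℕ, ∀ χ : (Fin N × Fin N) → (Fin N × Fin N) → Fin k,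
      ∃ I₁ I₂ : Finset (Fin N), I₁.card = n ∧ I₂.card = n ∧
        ∀ a b a' b' : Fin N × Fin N,
          a.1 ∈ I₁ → b.1 ∈ I₁ → a'.1 ∈ I₁ → b'.1 ∈ I₁ →
          a.2 ∈ I₂ → b.2 ∈ I₂ → a'.2 ∈ I₂ → b'.2 ∈ I₂ →
          compare a.1 b.1 = compare a'.1 b'.1 →
          compare a.2 b.2 = compare a'.2 b'.2 →
          χ a b = χ a' b' := by
  obtain ⟨N, hN⟩ := exists_isGridHomogeneous.{0} (Fin k) n
  refine ⟨N, fun χ => ?_⟩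
  obtain ⟨I₁, I₂, -, -, h₁, h₂, hχ⟩ := hN χ univ (by simp)
  exact ⟨I₁, I₂, h₁, h₂, hχ⟩
end

section
/- General Ramsey theorem for ℓ-tuples with order types: for all k, ℓ, n ∈ ℕ there exists N ∈ ℕ such that for every coloring λ : [N]^ℓ → [k] there is a subset I ⊆ [N] with |I| = n such that for all (a₁,…,a_ℓ) ∈ I^ℓ, the value λ(a₁,…,a_ℓ) depends only on the order type otp(a₁,…,a_ℓ). -/
lemma inf_fiber {κ : Type} [Finite κ] {A : Set ℕ} (hA : A.Infinite) (c : ℕ → κ) :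
    ∃ x, {n | n ∈ A ∧ c n = x}.Infinite := by
  haveI : Infinite A := hA.to_subtype
  obtain ⟨x, hx⟩ := Finite.exists_infinite_fiber (fun a : A => c a)
  refine ⟨x, ?_⟩
  have h1 : (Subtype.val '' ((fun a : A => c a) ⁻¹' {x})).Infinite :=
    (Set.infinite_coe_iff.mp hx).image (Subtype.val_injective.injOn)
  refine h1.mono ?_
  rintro _ ⟨⟨n, hn⟩, hcn, rfl⟩
  exact ⟨hn, hcn⟩

theorem inf_ramsey {κ : Type} [Finite κ] [Nonempty κ] :
    ∀ (ℓ : ℕ) (f : (Fin ℓ → ℕ) → κ) (S : Set ℕ), S.Infinite →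
      ∃ T c, T ⊆ S ∧ T.Infinite ∧
        ∀ x : Fin ℓ → ℕ, StrictMono x → (∀ i, x i ∈ T) → f x = c := by
  intro ℓ
  induction ℓ with
  | zero =>
    intro f S hS
    exact ⟨S, f (fun i => i.elim0), subset_rfl, hS, fun x _ _ =>
      congrArg f (funext fun i => i.elim0)⟩
  | succ ℓ IH =>
    intro f S hS
    -- the key one-step lemma
    have key : ∀ T : {T : Set ℕ // T.Infinite ∧ T ⊆ S}, ∃ p : ℕ × Set ℕ × κ,
        p.1 ∈ T.1 ∧ p.2.1 ⊆ T.1 ∧ p.2.1.Infinite ∧ (∀ y ∈ p.2.1, p.1 < y) ∧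
        ∀ a : Fin ℓ → ℕ, StrictMono a → (∀ i, a i ∈ p.2.1) →
          f (Fin.cons p.1 a) = p.2.2 := by
      rintro ⟨T, hTinf, hTS⟩
      obtain ⟨x, hx⟩ := hTinf.nonempty
      have h1 : {y | y ∈ T ∧ x < y}.Infinite := by
        refine (hTinf.diff (Set.finite_le_nat x)).mono ?_
        rintro y ⟨hy, hy2⟩
        exact ⟨hy, lt_of_not_ge hy2⟩
      obtain ⟨T', c, hsub, hinf, hhom⟩ := IH (fun a => f (Fin.cons x a)) _ h1
      exact ⟨(x, T', c), hx, fun y hy => (hsub hy).1, hinf,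
        fun y hy => (hsub hy).2, hhom⟩
    choose g hmem hsub hinf hlt hhom using key
    let ST := {T : Set ℕ // T.Infinite ∧ T ⊆ S}
    let nxt : ST → ST := fun T => ⟨(g T).2.1, hinf T, (hsub T).trans T.2.2⟩
    let seq : ℕ → ST := fun n => nxt^[n] ⟨S, hS, subset_rfl⟩
    have hseq : ∀ n, seq (n+1) = nxt (seq n) := fun n =>
      Function.iterate_succ_apply' nxt n _
    let x : ℕ → ℕ := fun n => (g (seq n)).1
    let col : ℕ → κ := fun n => (g (seq n)).2.2
    have hmono : ∀ m n, m ≤ n → (seq n).1 ⊆ (seq m).1 := by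
      intro m n hmn
      induction n with
      | zero => simp_all
      | succ n IH2 =>
        rcases Nat.eq_or_lt_of_le hmn with rfl | h
        · exact subset_rfl
        · refine subset_trans ?_ (IH2 (Nat.lt_succ_iff.mp h))
          rw [hseq]
          exact hsub (seq n)
    have hxin : ∀ n, x n ∈ (seq n).1 := fun n => hmem (seq n)
    have hltn : ∀ n y, y ∈ (seq (n+1)).1 → x n < y := by
      intro n y hy
      rw [hseq] at hy
      exact hlt (seq n) y hy
    have hxlt : ∀ m n, m < n → x m < x n := by
      intro m n hmn
      exact hltn m (x n) (hmono (m+1) n hmn (hxin n))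
    have hxinj : Function.Injective x := by
      intro m n h
      rcases lt_trichotomy m n with h' | h' | h'
      · exact absurd h (ne_of_lt (hxlt _ _ h'))
      · exact h'
      · exact absurd h.symm (ne_of_lt (hxlt _ _ h'))
    obtain ⟨c, hc⟩ := inf_fiber (Set.infinite_univ (α := ℕ)) col
    refine ⟨x '' {n | n ∈ Set.univ ∧ col n = c}, c, ?_, hc.image hxinj.injOn, ?_⟩
    · rintro _ ⟨n, _, rfl⟩
      exact (seq n).2.2 (hxin n)
    · rintro y hy hyT
      obtain ⟨n₀, ⟨_, hcn₀⟩, hxn₀⟩ := hyT 0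
      have htail : ∀ i : Fin ℓ, ∃ m, col m = c ∧ x m = Fin.tail y i := by
        intro i
        obtain ⟨m, ⟨_, hcm⟩, hxm⟩ := hyT i.succ
        exact ⟨m, hcm, hxm⟩
      choose m hcm hxm using htail
      have hmgt : ∀ i, n₀ < m i := by
        intro i
        have h1 : x n₀ < x (m i) := by
          rw [hxn₀, hxm]
          exact hy (Fin.succ_pos i)
        by_contra h
        rcases Nat.lt_or_ge n₀ (m i) with h' | h'
        · exact h h'
        · rcases Nat.eq_or_lt_of_le h' with rfl | h''
          · exact absurd h1 (lt_irrefl _)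
          · exact absurd (hxlt _ _ h'') (not_lt.mpr h1.le)
      have htmem : ∀ i, Fin.tail y i ∈ (seq (n₀+1)).1 := by
        intro i
        rw [← hxm i]
        exact hmono (n₀+1) (m i) (hmgt i) (hxin (m i))
      have htm : StrictMono (Fin.tail y) := fun i j hij => hy (Fin.succ_lt_succ_iff.mpr hij)
      have := hhom (seq n₀) (Fin.tail y) htm (by
        intro i
        have := htmem i
        rw [hseq] at this
        exact this)
      rw [← hcn₀]
      calc f y = f (Fin.cons (y 0) (Fin.tail y)) := by rw [Fin.cons_self_tail]
        _ = f (Fin.cons (x n₀) (Fin.tail y)) := by rw [hxn₀]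
        _ = col n₀ := this


/-- If two maps induce the same partition on `t`, their images have the same card. -/
lemma card_image_congr {α β γ : Type} [DecidableEq β] [DecidableEq γ]
    (t : Finset α) (g : α → β) (h : α → γ) :
    (∀ x ∈ t, ∀ y ∈ t, (g x = g y ↔ h x = h y)) →
    (t.image g).card = (t.image h).card := by
  classical
  induction t using Finset.induction_on with
  | empty => intro _; simp
  | @insert x t hx IH =>
    intro H
    rw [Finset.image_insert, Finset.image_insert]
    have H' : ∀ a ∈ t, ∀ b ∈ t, (g a = g b ↔ h a = h b) := fun a ha b hb =>
      H a (Finset.mem_insert_of_mem ha) b (Finset.mem_insert_of_mem hb)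
    by_cases hgx : g x ∈ t.image g
    · have hhx : h x ∈ t.image h := by
        obtain ⟨y, hy, hgy⟩ := Finset.mem_image.mp hgx
        exact Finset.mem_image.mpr ⟨y, hy, (H y (Finset.mem_insert_of_mem hy) x
          (Finset.mem_insert_self x t)).mp hgy⟩
      rw [Finset.insert_eq_self.mpr hgx, Finset.insert_eq_self.mpr hhx]
      exact IH H'
    · have hhx : h x ∉ t.image h := by
        intro hc
        obtain ⟨y, hy, hhy⟩ := Finset.mem_image.mp hc
        exact hgx (Finset.mem_image.mpr ⟨y, hy, (H y (Finset.mem_insert_of_mem hy) x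
          (Finset.mem_insert_self x t)).mpr hhy⟩)
      rw [Finset.card_insert_of_notMem hgx, Finset.card_insert_of_notMem hhx, IH H']

/-- The element of rank `r` in a finset equals the enumeration at `r`. -/
lemma rank_elem {ℓ : ℕ} (s' : Finset ℕ) (h : s'.card = ℓ) (y : ℕ) (hy : y ∈ s') :
    ∃ j : Fin ℓ, (s'.orderIsoOfFin h j : ℕ) = y ∧
      (j : ℕ) = (s'.filter (· < y)).card := by
  refine ⟨(s'.orderIsoOfFin h).symm ⟨y, hy⟩, by simp, ?_⟩
  set j := (s'.orderIsoOfFin h).symm ⟨y, hy⟩ with hj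
  have hxy : (s'.orderIsoOfFin h j : ℕ) = y := by simp [hj]
  have : s'.filter (· < y) = (Finset.Iio j).image (fun i => (s'.orderIsoOfFin h i : ℕ)) := by
    ext z
    simp only [Finset.mem_filter, Finset.mem_image, Finset.mem_Iio]
    constructor
    · rintro ⟨hz, hzy⟩
      refine ⟨(s'.orderIsoOfFin h).symm ⟨z, hz⟩, ?_, by simp⟩
      have : ((s'.orderIsoOfFin h) ((s'.orderIsoOfFin h).symm ⟨z, hz⟩) : ℕ) < ((s'.orderIsoOfFin h) j : ℕ) := by
        simpa [hxy] using hzy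
      exact (OrderIso.lt_iff_lt _).mp (Subtype.coe_lt_coe.mp this)
    · rintro ⟨i, hij, rfl⟩
      refine ⟨Finset.coe_mem _, ?_⟩
      rw [← hxy]
      exact Subtype.coe_lt_coe.mpr ((OrderIso.lt_iff_lt _).mpr hij)
  rw [this, Finset.card_image_of_injective _ (fun i₁ i₂ hi => by
    have := Subtype.ext hi
    exact (s'.orderIsoOfFin h).injective this), Fin.card_Iio]

theorem canon {k ℓ : ℕ} (hk : 0 < k) (lam : (Fin ℓ → ℕ) → Fin k) :
    ∃ T : Set ℕ, T.Infinite ∧ ∀ a b : Fin ℓ → ℕ, (∀ i, a i ∈ T) → (∀ i, b i ∈ T) →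
      (∀ i j, compare (a i) (a j) = compare (b i) (b j)) → lam a = lam b := by
  classical
  haveI : Nonempty (Fin k) := ⟨⟨0, hk⟩⟩
  obtain ⟨T, c, _, hTinf, hhom⟩ := inf_ramsey ℓ
    (fun x => fun p : Fin ℓ → Fin ℓ => lam (x ∘ p)) Set.univ Set.infinite_univ
  refine ⟨T, hTinf, ?_⟩
  -- rank function
  let rk : (Fin ℓ → ℕ) → Fin ℓ → ℕ :=
    fun a i => ((Finset.univ.image a).filter (· < a i)).card
  have hrk_lt : ∀ (a : Fin ℓ → ℕ) (i : Fin ℓ), rk a i < ℓ := by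
    intro a i
    have h1 : (Finset.univ.image a).filter (· < a i) ⊂ Finset.univ.image a := by
      rw [Finset.ssubset_iff_of_subset (Finset.filter_subset _ _)]
      exact ⟨a i, Finset.mem_image_of_mem a (Finset.mem_univ i),
        fun hc => absurd (Finset.mem_filter.mp hc).2 (lt_irrefl _)⟩
    exact lt_of_lt_of_le (Finset.card_lt_card h1)
      (Finset.card_image_le.trans_eq (by simp))
  -- existence of an enumerating increasing tuple
  have hex : ∀ a : Fin ℓ → ℕ, (∀ i, a i ∈ T) → ∃ x : Fin ℓ → ℕ,
      StrictMono x ∧ (∀ i, x i ∈ T) ∧ ∀ i, x ⟨rk a i, hrk_lt a i⟩ = a i := by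
    intro a ha
    set s := Finset.univ.image a with hs
    have hm : s.card ≤ ℓ := Finset.card_image_le.trans_eq (by simp)
    have hP : {y : ℕ | y ∈ T ∧ ∀ z ∈ s, z < y}.Infinite := by
      refine (hTinf.diff (Set.finite_le_nat (s.sup id))).mono ?_
      rintro y ⟨hy, hy2⟩
      exact ⟨hy, fun z hz => lt_of_le_of_lt (Finset.le_sup (f := id) hz)
        (lt_of_not_ge hy2)⟩
    obtain ⟨pad, hpadP, hpadcard⟩ := hP.exists_subset_card_eq (ℓ - s.card)
    have hdisj : Disjoint s pad := by
      rw [Finset.disjoint_left]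
      intro z hz hzp
      exact absurd ((hpadP hzp).2 z hz) (lt_irrefl z)
    have hcard : (s ∪ pad).card = ℓ := by
      rw [Finset.card_union_of_disjoint hdisj, hpadcard, Nat.add_sub_cancel' hm]
    refine ⟨fun i => ((s ∪ pad).orderIsoOfFin hcard i : ℕ), ?_, ?_, ?_⟩
    · intro i j hij
      exact Subtype.coe_lt_coe.mpr ((OrderIso.lt_iff_lt _).mpr hij)
    · intro i
      rcases Finset.mem_union.mp (Finset.coe_mem ((s ∪ pad).orderIsoOfFin hcard i)) with h | h
      · obtain ⟨j, _, hj⟩ := Finset.mem_image.mp h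
        show ((s ∪ pad).orderIsoOfFin hcard i : ℕ) ∈ T
        rw [← hj]
        exact ha j
      · exact (hpadP h).1
    · intro i
      have hais : a i ∈ s := Finset.mem_image_of_mem a (Finset.mem_univ i)
      obtain ⟨j, hj1, hj2⟩ := rank_elem (s ∪ pad) hcard (a i)
        (Finset.mem_union_left _ hais)
      have hfeq : (s ∪ pad).filter (· < a i) = s.filter (· < a i) := by
        ext z
        simp only [Finset.mem_filter, Finset.mem_union]
        constructor
        · rintro ⟨h | h, hz⟩
          · exact ⟨h, hz⟩
          · exact absurd ((hpadP h).2 (a i) hais) (not_lt.mpr hz.le)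
        · rintro ⟨h, hz⟩
          exact ⟨Or.inl h, hz⟩
      have : (⟨rk a i, hrk_lt a i⟩ : Fin ℓ) = j := by
        apply Fin.ext
        rw [hj2, hfeq]
      show ((s ∪ pad).orderIsoOfFin hcard ⟨rk a i, hrk_lt a i⟩ : ℕ) = a i
      rw [this]
      exact hj1
  -- conclusion
  intro a b ha hb hab
  have hrkeq : ∀ i, rk a i = rk b i := by
    intro i
    have h1 : (Finset.univ.image a).filter (· < a i)
        = (Finset.univ.filter (fun j => a j < a i)).image a := by
      ext z
      simp only [Finset.mem_filter, Finset.mem_image, Finset.mem_univ, true_and]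
      constructor
      · rintro ⟨⟨j, rfl⟩, hz⟩
        exact ⟨j, hz, rfl⟩
      · rintro ⟨j, hj, rfl⟩
        exact ⟨⟨j, rfl⟩, hj⟩
    have h2 : (Finset.univ.image b).filter (· < b i)
        = (Finset.univ.filter (fun j => b j < b i)).image b := by
      ext z
      simp only [Finset.mem_filter, Finset.mem_image, Finset.mem_univ, true_and]
      constructor
      · rintro ⟨⟨j, rfl⟩, hz⟩
        exact ⟨j, hz, rfl⟩
      · rintro ⟨j, hj, rfl⟩
        exact ⟨⟨j, rfl⟩, hj⟩
    have hfilt : (Finset.univ.filter (fun j => a j < a i))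
        = (Finset.univ.filter (fun j => b j < b i)) := by
      ext j
      simp only [Finset.mem_filter, Finset.mem_univ, true_and]
      constructor
      · intro h
        exact compare_lt_iff_lt.mp (by rw [← hab j i]; exact compare_lt_iff_lt.mpr h)
      · intro h
        exact compare_lt_iff_lt.mp (by rw [hab j i]; exact compare_lt_iff_lt.mpr h)
    show ((Finset.univ.image a).filter (· < a i)).card
        = ((Finset.univ.image b).filter (· < b i)).card
    rw [h1, h2, hfilt]
    apply card_image_congr
    intro u hu v hv
    constructor
    · intro h
      exact compare_eq_iff_eq.mp (by rw [← hab u v]; exact compare_eq_iff_eq.mpr h)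
    · intro h
      exact compare_eq_iff_eq.mp (by rw [hab u v]; exact compare_eq_iff_eq.mpr h)
  obtain ⟨xa, hxa1, hxa2, hxa3⟩ := hex a ha
  obtain ⟨xb, hxb1, hxb2, hxb3⟩ := hex b hb
  let p : Fin ℓ → Fin ℓ := fun i => ⟨rk a i, hrk_lt a i⟩
  have hap : a = xa ∘ p := funext fun i => (hxa3 i).symm
  have hbp : b = xb ∘ p := by
    funext i
    have : (⟨rk b i, hrk_lt b i⟩ : Fin ℓ) = p i := Fin.ext (hrkeq i).symm
    rw [Function.comp_apply]
    show b i = xb (p i)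
    rw [← this, hxb3 i]
  have h1 := hhom xa hxa1 hxa2
  have h2 := hhom xb hxb1 hxb2
  rw [hap, hbp]
  show (fun q : Fin ℓ → Fin ℓ => lam (xa ∘ q)) p = (fun q : Fin ℓ → Fin ℓ => lam (xb ∘ q)) p
  rw [h1, h2]

lemma fin_cmp {N : ℕ} (x y : Fin N) : compare x y = compare (x : ℕ) (y : ℕ) := by
  rcases lt_trichotomy x y with h | h | h
  · rw [compare_lt_iff_lt.mpr h, Eq.comm, compare_lt_iff_lt]
    exact h
  · rw [compare_eq_iff_eq.mpr h, Eq.comm, compare_eq_iff_eq]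
    exact congrArg _ h
  · rw [compare_gt_iff_gt.mpr h, Eq.comm, compare_gt_iff_gt]
    exact h

/-- General Ramsey theorem for `ℓ`-tuples with order types: for all
`k, ℓ, n` there is `N` such that for every coloring `λ : [N]^ℓ → [k]` there is
`I ⊆ [N]` with `|I| = n` such that on tuples from `I^ℓ` the color depends only on
the order type of the tuple (recorded via `compare` on all pairs of coordinates). -/
theorem stmt_11 (k ℓ n : ℕ) :
    ∃ N : ℕ, ∀ lam : (Fin ℓ → Fin N) → Fin k,
      ∃ I : Finset (Fin N), I.card = n ∧
        ∀ a b : Fin ℓ → Fin N, (∀ i, a i ∈ I) → (∀ i, b i ∈ I) →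
          (∀ i j, compare (a i) (a j) = compare (b i) (b j)) →
          lam a = lam b := by
  rcases Nat.eq_zero_or_pos k with rfl | hk
  · exact ⟨1, fun lam => (lam (fun _ => ⟨0, one_pos⟩)).elim0⟩
  by_contra hcon
  push_neg at hcon
  choose lamN hbad using hcon
  set U := Filter.hyperfilter ℕ with hU
  let g : (Fin ℓ → ℕ) → ℕ → Fin k := fun a N =>
    if h : ∀ i, a i < N then lamN N (fun i => ⟨a i, h i⟩) else ⟨0, hk⟩
  have hcol : ∀ a : Fin ℓ → ℕ, ∃ c : Fin k, {N | g a N = c} ∈ U := by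
    intro a
    have h1 : (⋃ c ∈ (Set.univ : Set (Fin k)), {N | g a N = c}) ∈ U := by
      have h2 : (⋃ c ∈ (Set.univ : Set (Fin k)), {N | g a N = c}) = Set.univ := by
        ext N
        simp only [Set.mem_iUnion, Set.mem_univ, iff_true, Set.mem_setOf_eq]
        exact ⟨g a N, trivial, rfl⟩
      rw [h2]
      exact Filter.univ_mem
    obtain ⟨c, _, hc⟩ := (Ultrafilter.finite_biUnion_mem_iff Set.finite_univ).mp h1
    exact ⟨c, hc⟩
  choose lim hlim using hcol
  obtain ⟨T, hTinf, hcanon⟩ := canon hk lim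
  obtain ⟨I₀, hI₀T, hI₀card⟩ := hTinf.exists_subset_card_eq n
  have hbig : (⋂ v : Fin ℓ → {x // x ∈ I₀},
      {N | g (fun i => (v i : ℕ)) N = lim (fun i => (v i : ℕ))}) ∈ U :=
    Filter.iInter_mem.mpr (fun v => hlim _)
  have hbound : {N : ℕ | ∀ y ∈ I₀, y < N} ∈ U := by
    apply Filter.mem_hyperfilter_of_finite_compl
    refine (Set.finite_le_nat (I₀.sup id)).subset ?_
    intro N hN
    simp only [Set.mem_compl_iff, Set.mem_setOf_eq, not_forall] at hN
    obtain ⟨y, hy, hNy⟩ := hN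
    exact le_trans (not_lt.mp hNy) (Finset.le_sup (f := id) hy)
  obtain ⟨N, hN1, hN2⟩ := Ultrafilter.nonempty_of_mem (Filter.inter_mem hbig hbound)
  have hltN : ∀ m ∈ I₀, m < N := hN2
  obtain ⟨a, b, ha, hb, hcmp, hne⟩ := hbad N (I₀.attachFin hltN)
    (by rw [Finset.card_attachFin]; exact hI₀card)
  have hmem : ∀ x : Fin N, x ∈ I₀.attachFin hltN → (x : ℕ) ∈ I₀ := by
    intro x hx
    exact (Finset.mem_attachFin hltN).mp hx
  have haI : ∀ i, ((a i : ℕ)) ∈ I₀ := fun i => hmem _ (ha i)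
  have hbI : ∀ i, ((b i : ℕ)) ∈ I₀ := fun i => hmem _ (hb i)
  have hlimeq : lim (fun i => (a i : ℕ)) = lim (fun i => (b i : ℕ)) := by
    apply hcanon
    · exact fun i => hI₀T (haI i)
    · exact fun i => hI₀T (hbI i)
    · intro i j
      rw [← fin_cmp, ← fin_cmp]
      exact hcmp i j
  have hga : ∀ c : Fin ℓ → Fin N, (∀ i, c i ∈ I₀.attachFin hltN) →
      g (fun i => (c i : ℕ)) N = lamN N c := by
    intro c hc
    have h : ∀ i, (c i : ℕ) < N := fun i => (c i).isLt
    show (if h : ∀ i, (c i : ℕ) < N then lamN N (fun i => ⟨(c i : ℕ), h i⟩) else ⟨0, hk⟩)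
      = lamN N c
    rw [dif_pos h]
  have hNa := Set.mem_iInter.mp hN1 (fun i => (⟨(a i : ℕ), haI i⟩ : {x // x ∈ I₀}))
  have hNb := Set.mem_iInter.mp hN1 (fun i => (⟨(b i : ℕ), hbI i⟩ : {x // x ∈ I₀}))
  simp only [Set.mem_setOf_eq] at hNa hNb
  apply hne
  calc lamN N a = g (fun i => (a i : ℕ)) N := (hga a ha).symm
    _ = lim (fun i => (a i : ℕ)) := hNa
    _ = lim (fun i => (b i : ℕ)) := hlimeq
    _ = g (fun i => (b i : ℕ)) N := hNb.symm
    _ = lamN N b := hga b hb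
end

section
/- Bipartite Ramsey theorem: there exists a function R_bip : ℕ × ℕ → ℕ such that for all k, n ∈ ℕ and every coloring of the edges of the complete bipartite graph K_{R_bip(k,n), R_bip(k,n)} with k colors, there exist sets A' and B' of size n on the two sides such that all edges between A' and B' have the same color. -/
/-- Bipartite Ramsey theorem: there is a function `R : ℕ × ℕ → ℕ` such
that for all `k, n` and every coloring of the edges of the complete bipartite graph
`K_{R k n, R k n}` with `k` colors, there are sets `A'`, `B'` of size `n` on the two
sides such that all edges between `A'` and `B'` have the same color. -/
theorem stmt_12 :
    ∃ R : ℕ → ℕ → ℕ, ∀ k n : ℕ,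
      ∀ χ : Fin (R k n) → Fin (R k n) → Fin k,
        ∃ A' B' : Finset (Fin (R k n)), A'.card = n ∧ B'.card = n ∧
          ∀ a ∈ A', ∀ b ∈ B', ∀ a' ∈ A', ∀ b' ∈ B', χ a b = χ a' b' := by
  refine ⟨fun k n => n * k ^ (k * n + 1) + (k * n + 1), fun k n χ => ?_⟩
  set M := k * n + 1 with hM
  set R := n * k ^ M + M with hR
  rcases Nat.eq_zero_or_pos k with hk | hk
  · subst hk
    exact (χ ⟨0, by simp [hR, hM]⟩ ⟨0, by simp [hR, hM]⟩).elim0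
  have : NeZero k := ⟨hk.ne'⟩
  have hMR : M ≤ R := Nat.le_add_left _ _
  -- classify columns by their restriction to the first M rows
  set f : Fin R → (Fin M → Fin k) := fun b a => χ (Fin.castLE hMR a) b with hf
  have hcard : Fintype.card (Fin M → Fin k) * n ≤ Fintype.card (Fin R) := by
    simp only [Fintype.card_fun, Fintype.card_fin, hR]
    exact le_trans (le_of_eq (Nat.mul_comm _ _)) (Nat.le_add_right _ _)
  obtain ⟨v, hv⟩ := Fintype.exists_le_card_fiber_of_mul_le_card f hcard
  obtain ⟨B', hB'sub, hB'card⟩ := Finset.exists_subset_card_eq hv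
  -- pigeonhole on rows: v takes some value at least n times
  have hcard2 : Fintype.card (Fin k) * n ≤ Fintype.card (Fin M) := by
    simp only [Fintype.card_fin, hM]
    exact Nat.le_succ_of_le (Nat.le_refl _)
  obtain ⟨c, hc⟩ := Fintype.exists_le_card_fiber_of_mul_le_card v hcard2
  obtain ⟨A0, hA0sub, hA0card⟩ := Finset.exists_subset_card_eq hc
  refine ⟨A0.image (Fin.castLE hMR), B', ?_, hB'card, ?_⟩
  · rw [Finset.card_image_of_injective _ (Fin.castLE_injective hMR), hA0card]
  · intro a ha b hb a' ha' b' hb'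
    simp only [Finset.mem_image] at ha ha'
    obtain ⟨a0, ha0, rfl⟩ := ha
    obtain ⟨a0', ha0', rfl⟩ := ha'
    have hva : v a0 = c := by
      have := hA0sub ha0; simpa using this
    have hva' : v a0' = c := by
      have := hA0sub ha0'; simpa using this
    have hfb : f b = v := by simpa using hB'sub hb
    have hfb' : f b' = v := by simpa using hB'sub hb'
    have h1 : χ (Fin.castLE hMR a0) b = v a0 := by rw [← hfb]
    have h2 : χ (Fin.castLE hMR a0') b' = v a0' := by rw [← hfb']
    rw [h1, h2, hva, hva']
end
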